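/- arXiv:2101.04580 — 7 statements merged into one kernel-verified Lean document; each statement's English description precedes it below -/
import Mathlib

section
/- A unitary operator U on C^q ⊗ C^q is dual-unitary (i.e., U^{R1} is unitary) if and only if all operator Schmidt coefficients γ_j of U equal 1, equivalently if and only if the operator entanglement E(U) = 1 - (1/q⁴)·tr[(U^{R1} U^{R1†})²] attains its maximal value 1 - 1/q². -/
open Matrix

/-- Matrices on the tensor product `ℂ^q ⊗ ℂ^q`, indexed by pairs. -/
abbrev MQ (q : ℕ) := Matrix (Fin q × Fin q) (Fin q × Fin q) ℂ

/-- Realignment R1 : `⟨βα|A^{R1}|ji⟩ = ⟨iα|A|jβ⟩`. -/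
def R1 {q : ℕ} (A : MQ q) : MQ q := fun p r => A (r.2, p.2) (r.1, p.1)

/-- Realignment R2 : `⟨ij|A^{R2}|αβ⟩ = ⟨iα|A|jβ⟩`. -/
def R2 {q : ℕ} (A : MQ q) : MQ q := fun p r => A (p.1, r.1) (p.2, r.2)

/-- The swap operator `S|iα⟩ = |αi⟩`. -/
def Swap (q : ℕ) : MQ q := fun p r => if p.1 = r.2 ∧ p.2 = r.1 then 1 else 0

/-- Partial transpose on the first factor: `⟨jα|A^{T1}|iβ⟩ = ⟨iα|A|jβ⟩`. -/
def T1 {q : ℕ} (A : MQ q) : MQ q := fun p r => A (r.1, p.2) (p.1, r.2)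

/-- Partial transpose on the second factor: `⟨iβ|A^{T2}|jα⟩ = ⟨iα|A|jβ⟩`. -/
def T2 {q : ℕ} (A : MQ q) : MQ q := fun p r => A (p.1, r.2) (r.1, p.2)

/-- The operator entanglement `E(U) = 1 - (1/q⁴) tr[(U^{R1} U^{R1†})²]`. -/
noncomputable def opEnt {q : ℕ} (U : MQ q) : ℂ :=
  1 - (1 / (q : ℂ) ^ 4) * Matrix.trace ((R1 U * (R1 U)ᴴ) * (R1 U * (R1 U)ᴴ))

/-!
Realignment only permutes matrix entries, so `U^{R1}` has the same Frobenius norm as the unitary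
`U`: the Hermitian matrix `G = U^{R1} U^{R1†}` has `tr G = q²`, the dimension. For such a `G`,
`tr ((G - 1)ᴴ (G - 1)) = tr G² - q²`, so `G = 1` (dual-unitarity) exactly when `tr G² = q²`,
which is the equation `E(U) = 1 - 1/q²`. Finally a Hermitian matrix is `1` iff its spectrum is `{1}`.
-/

namespace Matrix

open scoped ComplexOrder

variable {n 𝕜 : Type*} [Fintype n] [DecidableEq n] [RCLike 𝕜]

theorem IsHermitian.forall_spectrum_eq_one_iff [Nonempty n] {G : Matrix n n 𝕜}
    (hG : G.IsHermitian) : (∀ γ ∈ spectrum 𝕜 G, γ = 1) ↔ G = 1 := by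
  refine ⟨fun h => CFC.eq_one_of_spectrum_subset_one (R := ℝ) G
    (fun x hx => by simpa using h _ (spectrum.algebraMap_mem 𝕜 hx)) hG, fun h γ hγ => ?_⟩
  rwa [h, spectrum.one_eq, Set.mem_singleton_iff] at hγ

theorem IsHermitian.eq_one_iff_trace_mul_self {G : Matrix n n 𝕜} (hG : G.IsHermitian)
    (htr : G.trace = Fintype.card n) : G = 1 ↔ (G * G).trace = Fintype.card n := by
  refine ⟨fun h => by simp [h], fun h => ?_⟩
  have : ((G - 1)ᴴ * (G - 1)).trace = 0 := by
    rw [conjTranspose_sub, hG.eq, conjTranspose_one]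
    simp only [sub_mul, mul_sub, mul_one, one_mul, trace_sub, trace_one, h, htr]
    ring
  exact sub_eq_zero.mp (trace_conjTranspose_mul_self_eq_zero_iff.mp this)

end Matrix

theorem vec_R1 {q : ℕ} (A : MQ q) :
    (R1 A).vec = A.vec ∘ Equiv.prodProdProdComm _ _ _ _ :=
  rfl

theorem trace_R1_mul_conjTranspose_R1 {q : ℕ} (A : MQ q) :
    (R1 A * (R1 A)ᴴ).trace = (Aᴴ * A).trace := by
  rw [trace_mul_comm, ← star_vec_dotProduct_vec, ← star_vec_dotProduct_vec, vec_R1]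
  exact comp_equiv_dotProduct_comp_equiv (star A.vec) A.vec _

theorem opEnt_eq_one_sub_inv_sq_iff {q : ℕ} (hq : q ≠ 0) (U : MQ q) :
    opEnt U = 1 - 1 / (q : ℂ) ^ 2 ↔
      (R1 U * (R1 U)ᴴ * (R1 U * (R1 U)ᴴ)).trace = (q : ℂ) ^ 2 := by
  have hq' : (q : ℂ) ≠ 0 := Nat.cast_ne_zero.mpr hq
  rw [opEnt, sub_right_inj]
  constructor <;> intro h
  · field_simp at h
    linear_combination h
  · rw [h]
    field_simp

/-- a unitary `U` is dual-unitary (`U^{R1}` unitary) iff all the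
operator Schmidt coefficients (the eigenvalues of `U^{R1} U^{R1†}`) equal `1`,
equivalently iff the operator entanglement attains its maximum `1 - 1/q²`. -/
theorem dual_unitary_iff_schmidt_iff_opEnt_max (q : ℕ) (hq : 0 < q) (U : MQ q)
    (hU : U ∈ Matrix.unitaryGroup (Fin q × Fin q) ℂ) :
    (R1 U ∈ Matrix.unitaryGroup (Fin q × Fin q) ℂ ↔
      ∀ γ ∈ spectrum ℂ (R1 U * (R1 U)ᴴ), γ = 1) ∧
    (R1 U ∈ Matrix.unitaryGroup (Fin q × Fin q) ℂ ↔
      opEnt U = 1 - 1 / (q : ℂ) ^ 2) := by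
  have : Nonempty (Fin q × Fin q) := ⟨(⟨0, hq⟩, ⟨0, hq⟩)⟩
  have hG : (R1 U * (R1 U)ᴴ).IsHermitian := isHermitian_mul_conjTranspose_self _
  have hcard : (Fintype.card (Fin q × Fin q) : ℂ) = (q : ℂ) ^ 2 := by simp [sq]
  have htr : (R1 U * (R1 U)ᴴ).trace = Fintype.card (Fin q × Fin q) := by
    rw [trace_R1_mul_conjTranspose_R1, ← star_eq_conjTranspose, mem_unitaryGroup_iff'.mp hU,
      trace_one]
  rw [mem_unitaryGroup_iff, star_eq_conjTranspose, hG.forall_spectrum_eq_one_iff,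
    opEnt_eq_one_sub_inv_sq_iff hq.ne', ← hcard, hG.eq_one_iff_trace_mul_self htr]
  exact ⟨Iff.rfl, Iff.rfl⟩
end

section
/- If U is a 2-unitary operator on C^q ⊗ C^q, then the superoperator M₊[U] = (1/q)(U^{T2} U^{T2†})^{R1} equals the rank-one projector |Φ⁺⟩⟨Φ⁺| onto the maximally entangled state; in particular all nontrivial eigenvalues of M₊[U] vanish. -/
open Matrix

/-- The channel superoperator `M₊[U] = (1/q) (U^{T2} U^{T2†})^{R1}`. -/
noncomputable def Mplus {q : ℕ} (U : MQ q) : MQ q :=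
  ((q : ℂ))⁻¹ • R1 (T2 U * (T2 U)ᴴ)

/-- The maximally entangled state `|Φ⁺⟩ = (1/√q) Σ_j |jj⟩`. -/
noncomputable def PhiPlus (q : ℕ) : Fin q × Fin q → ℂ :=
  fun p => if p.1 = p.2 then ((Real.sqrt q : ℝ) : ℂ)⁻¹ else 0

theorem R1_one (q : ℕ) :
    R1 (1 : MQ q) = of fun p r => if p.1 = p.2 ∧ r.1 = r.2 then 1 else 0 := by
  ext p r
  simp only [R1, one_apply, of_apply, Prod.ext_iff, eq_comm, and_comm]

theorem inv_sqrt_mul_inv_sqrt (q : ℕ) :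
    ((Real.sqrt q : ℝ) : ℂ)⁻¹ * ((Real.sqrt q : ℝ) : ℂ)⁻¹ = (q : ℂ)⁻¹ := by
  rw [← mul_inv, ← Complex.ofReal_mul, Real.mul_self_sqrt (Nat.cast_nonneg q),
    Complex.ofReal_natCast]

theorem vecMulVec_PhiPlus_star (q : ℕ) :
    vecMulVec (PhiPlus q) (star (PhiPlus q)) = (q : ℂ)⁻¹ • R1 (1 : MQ q) := by
  ext p r
  by_cases hp : p.1 = p.2 <;> by_cases hr : r.1 = r.2 <;>
    simp [vecMulVec_apply, PhiPlus, R1_one, hp, hr, inv_sqrt_mul_inv_sqrt]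

theorem Mplus_of_T2_mem_unitaryGroup {q : ℕ} {U : MQ q}
    (hT2 : T2 U ∈ unitaryGroup (Fin q × Fin q) ℂ) : Mplus U = (q : ℂ)⁻¹ • R1 1 := by
  rw [Mplus, show T2 U * (T2 U)ᴴ = 1 from mem_unitaryGroup_iff.mp hT2]

theorem Mplus_of_two_unitary_general (q : ℕ) (U : MQ q)
    (hT2 : T2 U ∈ Matrix.unitaryGroup (Fin q × Fin q) ℂ) :
    Mplus U = vecMulVec (PhiPlus q) (star (PhiPlus q)) := by
  rw [Mplus_of_T2_mem_unitaryGroup hT2, vecMulVec_PhiPlus_star]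

/-- if `U` is 2-unitary (U, U^{R1}, U^{T2} all unitary) then
`M₊[U] = |Φ⁺⟩⟨Φ⁺|`; in particular all nontrivial eigenvalues vanish. -/
theorem Mplus_of_two_unitary (q : ℕ) (hq : 0 < q) (U : MQ q)
    (hU : U ∈ Matrix.unitaryGroup (Fin q × Fin q) ℂ)
    (hR1 : R1 U ∈ Matrix.unitaryGroup (Fin q × Fin q) ℂ)
    (hT2 : T2 U ∈ Matrix.unitaryGroup (Fin q × Fin q) ℂ) :
    Mplus U = vecMulVec (PhiPlus q) (star (PhiPlus q)) :=
  Mplus_of_two_unitary_general q U hT2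
end

section
/- Conversely, if U is a dual-unitary operator such that the superoperator M₊[U] = (1/q)(U^{T2} U^{T2†})^{R1} has rank one (equivalently all nontrivial eigenvalues are zero), then U^{T2} is unitary and hence U is 2-unitary. -/
open Matrix

/-! Unitarity of `U` makes both partial traces of `U^{T2} U^{T2†}` equal to `q • 1`,
so `|Φ⁺⟩` is a right and a left fixed vector of `M₊[U]`. A rank-one matrix with right
and left fixed vectors `v`, `w` satisfying `w ⬝ᵥ v = 1` is `v wᵀ`; hence
`M₊[U] = |Φ⁺⟩⟨Φ⁺|`. As `1^{R1} = q |Φ⁺⟩⟨Φ⁺|` and realignment is injective,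
`U^{T2} U^{T2†} = 1`. -/

namespace Matrix

variable {m n K R : Type*}

theorem eq_vecMulVec_of_rank_le_one [Fintype n] [Field K] {M : Matrix n n K} {v w : n → K}
    (hM : M.rank ≤ 1) (hv : M *ᵥ v = v) (hw : w ᵥ* M = w) (hwv : w ⬝ᵥ v = 1) :
    M = vecMulVec v w := by
  have hv0 : v ≠ 0 := by rintro rfl; simp at hwv
  have hrange : K ∙ v = LinearMap.range M.mulVecLin := by
    refine Submodule.eq_of_le_of_finrank_le ?_ ?_
    · exact (Submodule.span_singleton_le_iff_mem _ _).mpr ⟨v, hv⟩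
    · rwa [finrank_span_singleton hv0]
  have hcol : ∀ r, ∃ c : K, c • v = M.col r := fun r => by
    rw [← Submodule.mem_span_singleton, hrange, range_mulVecLin]
    exact Submodule.subset_span ⟨r, rfl⟩
  choose c hc using hcol
  have hcw : c = w := funext fun r => by
    rw [← hw, vecMul_apply, ← hc, dotProduct_smul, hwv, smul_eq_mul, mul_one]
  ext p r
  rw [vecMulVec_apply, ← hcw, ← col_apply M r p, ← hc, Pi.smul_apply, smul_eq_mul, mul_comm]

def partialTraceFst [Fintype m] [AddCommMonoid R] (A : Matrix (m × n) (m × n) R) :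
    Matrix n n R :=
  of fun α β => ∑ j, A (j, α) (j, β)

def partialTraceSnd [Fintype n] [AddCommMonoid R] (A : Matrix (m × n) (m × n) R) :
    Matrix m m R :=
  of fun i k => ∑ j, A (i, j) (k, j)

theorem partialTraceFst_one [Fintype m] [DecidableEq m] [DecidableEq n] [Semiring R] :
    partialTraceFst (1 : Matrix (m × n) (m × n) R) = (Fintype.card m : R) • 1 := by
  ext α β
  by_cases h : α = β <;> simp [partialTraceFst, one_apply, h]

theorem partialTraceSnd_one [Fintype n] [DecidableEq m] [DecidableEq n] [Semiring R] :
    partialTraceSnd (1 : Matrix (m × n) (m × n) R) = (Fintype.card n : R) • 1 := by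
  ext i k
  by_cases h : i = k <;> simp [partialTraceSnd, one_apply, h]

end Matrix

section
variable {q : ℕ}

theorem R1_injective : Function.Injective (R1 (q := q)) := fun A B h => by
  ext x y
  simpa [R1] using congr_fun₂ h (y.2, x.2) (y.1, x.1)

theorem partialTraceFst_T2_mul_conjTranspose (U : MQ q) :
    partialTraceFst (T2 U * (T2 U)ᴴ) = (partialTraceFst (Uᴴ * U))ᵀ := by
  ext α β
  simp only [partialTraceFst, transpose_apply, of_apply, mul_apply, Fintype.sum_prod_type, T2,
    conjTranspose_apply]
  rw [Finset.sum_comm]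
  simp only [mul_comm]

theorem partialTraceSnd_T2_mul_conjTranspose (U : MQ q) :
    partialTraceSnd (T2 U * (T2 U)ᴴ) = partialTraceSnd (U * Uᴴ) := by
  ext α β
  simp only [partialTraceSnd, of_apply, mul_apply, Fintype.sum_prod_type, T2,
    conjTranspose_apply]
  conv_lhs => enter [2, j]; rw [Finset.sum_comm]
  rw [Finset.sum_comm]
  conv_lhs => enter [2, b]; rw [Finset.sum_comm]

theorem PhiPlus_mul_PhiPlus (p r : Fin q × Fin q) :
    PhiPlus q p * PhiPlus q r = if p.1 = p.2 ∧ r.1 = r.2 then (q : ℂ)⁻¹ else 0 := by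
  have hs : ((√q : ℝ) : ℂ)⁻¹ * ((√q : ℝ) : ℂ)⁻¹ = (q : ℂ)⁻¹ := by
    rw [← mul_inv, ← Complex.ofReal_mul, Real.mul_self_sqrt (Nat.cast_nonneg _)]
    push_cast; rfl
  by_cases hp : p.1 = p.2 <;> by_cases hr : r.1 = r.2 <;> simp [PhiPlus, hp, hr, hs]

theorem dotProduct_PhiPlus_self (hq : 0 < q) : PhiPlus q ⬝ᵥ PhiPlus q = 1 := by
  have hq' : (q : ℂ) ≠ 0 := by exact_mod_cast hq.ne'
  simp [dotProduct, PhiPlus_mul_PhiPlus, Fintype.sum_prod_type, hq']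

theorem R1_one_s7 : R1 (1 : MQ q) = (q : ℂ) • vecMulVec (PhiPlus q) (PhiPlus q) := by
  ext p r
  have hq : (q : ℂ) ≠ 0 := by exact_mod_cast (Fin.pos p.1).ne'
  by_cases hp : p.1 = p.2 <;> by_cases hr : r.1 = r.2 <;>
    simp [R1, one_apply, vecMulVec_apply, PhiPlus_mul_PhiPlus, hp, hr, hq, Prod.ext_iff, eq_comm]

theorem R1_mulVec_PhiPlus {A : MQ q} {c : ℂ} (h : partialTraceFst A = c • 1) :
    R1 A *ᵥ PhiPlus q = c • PhiPlus q := by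
  ext p
  simp only [mulVec, dotProduct, R1, PhiPlus, Fintype.sum_prod_type]
  have := congr_fun₂ h p.2 p.1
  simp only [partialTraceFst, of_apply] at this
  simp only [mul_ite, mul_zero, Finset.sum_ite_eq, Finset.mem_univ, if_true]
  rw [← Finset.sum_mul, this]
  by_cases hp : p.1 = p.2 <;> simp [PhiPlus, one_apply, hp, eq_comm]

theorem PhiPlus_vecMul_R1 {A : MQ q} {c : ℂ} (h : partialTraceSnd A = c • 1) :
    PhiPlus q ᵥ* R1 A = c • PhiPlus q := by
  ext p
  simp only [vecMul, dotProduct, R1, PhiPlus, Fintype.sum_prod_type]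
  have := congr_fun₂ h p.2 p.1
  simp only [partialTraceSnd, of_apply] at this
  simp only [ite_mul, zero_mul, Finset.sum_ite_eq, Finset.mem_univ, if_true]
  rw [← Finset.mul_sum, this]
  by_cases hp : p.1 = p.2 <;> simp [PhiPlus, one_apply, hp, eq_comm, mul_comm]

theorem partialTraceFst_T2_mul_conjTranspose_of_mem_unitaryGroup {U : MQ q}
    (hU : U ∈ unitaryGroup (Fin q × Fin q) ℂ) :
    partialTraceFst (T2 U * (T2 U)ᴴ) = (q : ℂ) • 1 := by
  rw [partialTraceFst_T2_mul_conjTranspose, ← star_eq_conjTranspose, mem_unitaryGroup_iff'.mp hU,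
    partialTraceFst_one, Fintype.card_fin, transpose_smul, transpose_one]

theorem partialTraceSnd_T2_mul_conjTranspose_of_mem_unitaryGroup {U : MQ q}
    (hU : U ∈ unitaryGroup (Fin q × Fin q) ℂ) :
    partialTraceSnd (T2 U * (T2 U)ᴴ) = (q : ℂ) • 1 := by
  rw [partialTraceSnd_T2_mul_conjTranspose, ← star_eq_conjTranspose, mem_unitaryGroup_iff.mp hU,
    partialTraceSnd_one, Fintype.card_fin]

theorem Mplus_mulVec_PhiPlus (hq : q ≠ 0) {U : MQ q}
    (hU : U ∈ unitaryGroup (Fin q × Fin q) ℂ) :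
    Mplus U *ᵥ PhiPlus q = PhiPlus q := by
  rw [Mplus, smul_mulVec,
    R1_mulVec_PhiPlus (partialTraceFst_T2_mul_conjTranspose_of_mem_unitaryGroup hU),
    inv_smul_smul₀ (Nat.cast_ne_zero.mpr hq)]

theorem PhiPlus_vecMul_Mplus (hq : q ≠ 0) {U : MQ q}
    (hU : U ∈ unitaryGroup (Fin q × Fin q) ℂ) :
    PhiPlus q ᵥ* Mplus U = PhiPlus q := by
  rw [Mplus, vecMul_smul,
    PhiPlus_vecMul_R1 (partialTraceSnd_T2_mul_conjTranspose_of_mem_unitaryGroup hU),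
    inv_smul_smul₀ (Nat.cast_ne_zero.mpr hq)]

theorem Mplus_eq_vecMulVec_PhiPlus (hq : 0 < q) {U : MQ q}
    (hU : U ∈ unitaryGroup (Fin q × Fin q) ℂ) (hrank : (Mplus U).rank ≤ 1) :
    Mplus U = vecMulVec (PhiPlus q) (PhiPlus q) :=
  eq_vecMulVec_of_rank_le_one hrank (Mplus_mulVec_PhiPlus hq.ne' hU)
    (PhiPlus_vecMul_Mplus hq.ne' hU) (dotProduct_PhiPlus_self hq)

end

theorem two_unitary_of_Mplus_rank_one_general (q : ℕ) (hq : 0 < q) (U : MQ q)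
    (hU : U ∈ Matrix.unitaryGroup (Fin q × Fin q) ℂ)
    (hrank : (Mplus U).rank = 1) :
    T2 U ∈ Matrix.unitaryGroup (Fin q × Fin q) ℂ := by
  have hR1 : R1 (T2 U * (T2 U)ᴴ) = R1 1 := by
    rw [R1_one_s7, ← Mplus_eq_vecMulVec_PhiPlus hq hU hrank.le, Mplus,
      smul_inv_smul₀ (Nat.cast_ne_zero.mpr hq.ne')]
  exact mem_unitaryGroup_iff.mpr (R1_injective hR1)

/-- if `U` is dual-unitary and `M₊[U]` has rank one, then
`U^{T2}` is unitary, hence `U` is 2-unitary. -/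
theorem two_unitary_of_Mplus_rank_one (q : ℕ) (hq : 0 < q) (U : MQ q)
    (hU : U ∈ Matrix.unitaryGroup (Fin q × Fin q) ℂ)
    (hR1 : R1 U ∈ Matrix.unitaryGroup (Fin q × Fin q) ℂ)
    (hrank : (Mplus U).rank = 1) :
    T2 U ∈ Matrix.unitaryGroup (Fin q × Fin q) ℂ :=
  two_unitary_of_Mplus_rank_one_general q hq U hU hrank
end

section
/- For X = A†A and Y = BB† with A, B matrices on C^q ⊗ C^q, the Haar average over u ∈ U(q) of tr[X (u⊗u*) Y (u†⊗u^T)] equals (1/(q²-1))(tr X^{R2} tr Y^{R2} + tr X tr Y) - (1/(q(q²-1)))(tr X^{R2} tr Y + tr X tr Y^{R2}). -/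
open Matrix Kronecker MeasureTheory

noncomputable instance matrixMeasurableSpace (q : ℕ) : MeasurableSpace (Matrix (Fin q) (Fin q) ℂ) :=
  inferInstanceAs (MeasurableSpace (Fin q → Fin q → ℂ))

/-- Kronecker delta with values in `ℂ`. -/
def δ {α : Type*} [DecidableEq α] (a b : α) : ℂ := if a = b then 1 else 0

/-! The trace is a bilinear contraction of `X` and `Y` against the fourth-moment tensor
`u_{jk} u*_{βγ} u_{ατ} u*_{im}`, so the average contracts them against the Weingarten tensor
instead. Each of its four delta patterns is a product of a matrix in `(i,α),(j,β)` and one in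
`(k,γ),(m,τ)`, namely the identity (pairing with `X` gives `tr X`) or `R2 1` (giving
`tr X^{R2}`), so every contraction splits into a product of two traces. -/

section Contraction

variable {R ι : Type*} [CommSemiring R] [Fintype ι]

def contract (X Y : Matrix ι ι R) : (ι → ι → ι → ι → R) →ₗ[R] R where
  toFun T := ∑ a, ∑ b, ∑ c, ∑ d, X a b * Y c d * T a b c d
  map_add' S T := by simp only [Pi.add_apply, mul_add, Finset.sum_add_distrib]
  map_smul' r T := by
    simp only [Pi.smul_apply, smul_eq_mul, RingHom.id_apply, Finset.mul_sum]
    exact Fintype.sum_congr _ _ fun _ => Fintype.sum_congr _ _ fun _ =>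
      Fintype.sum_congr _ _ fun _ => Fintype.sum_congr _ _ fun _ => by ring

lemma contract_apply (X Y : Matrix ι ι R) (T : ι → ι → ι → ι → R) :
    contract X Y T = ∑ a, ∑ b, ∑ c, ∑ d, X a b * Y c d * T a b c d := rfl

def pairTensor (F G : Matrix ι ι R) : ι → ι → ι → ι → R := fun a b c d => F a b * G c d

lemma contract_pairTensor (X Y F G : Matrix ι ι R) :
    contract X Y (pairTensor F G) =
      (∑ a, ∑ b, X a b * F a b) * ∑ c, ∑ d, Y c d * G c d := by
  simp only [contract_apply, pairTensor, Finset.sum_mul_sum]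
  refine Fintype.sum_congr _ _ fun a => ?_
  rw [Finset.sum_comm]
  exact Fintype.sum_congr _ _ fun _ => Fintype.sum_congr _ _ fun _ =>
    Fintype.sum_congr _ _ fun _ => by ring

end Contraction

lemma integral_contract {ι Ω : Type*} [Fintype ι] [MeasurableSpace Ω] {μ : Measure Ω}
    (X Y : Matrix ι ι ℂ) (T : Ω → ι → ι → ι → ι → ℂ)
    (hT : ∀ a b c d, Integrable (fun ω => T ω a b c d) μ) :
    ∫ ω, contract X Y (T ω) ∂μ = contract X Y fun a b c d => ∫ ω, T ω a b c d ∂μ := by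
  simp only [contract_apply, ← integral_const_mul, ← Fintype.sum_prod_type']
  exact integral_finsetSum _ fun _ _ => (hT _ _ _ _).const_mul _

lemma trace_mul_kronecker_mul_kronecker_eq_contract {n : Type*} [Fintype n] [DecidableEq n]
    (X Y : Matrix (n × n) (n × n) ℂ) (u : Matrix n n ℂ) :
    trace (X * (u ⊗ₖ u.map star) * Y * (uᴴ ⊗ₖ uᵀ)) =
      contract X Y fun p₁ p₂ p₃ p₄ =>
        u p₂.1 p₃.1 * star (u p₂.2 p₃.2) * u p₁.2 p₄.2 * star (u p₁.1 p₄.1) := by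
  simp only [trace, diag_apply, mul_apply, kroneckerMap_apply, map_apply,
    conjTranspose_apply, transpose_apply, Finset.sum_mul, contract_apply]
  refine Fintype.sum_congr _ _ fun _ => ?_
  rw [Finset.sum_comm]
  refine (Fintype.sum_congr _ _ fun _ => Finset.sum_comm).trans Finset.sum_comm |>.trans ?_
  exact Fintype.sum_congr _ _ fun _ => Fintype.sum_congr _ _ fun _ =>
    Fintype.sum_congr _ _ fun _ => by ring

lemma sum_mul_one_apply {ι : Type*} [Fintype ι] [DecidableEq ι] (X : Matrix ι ι ℂ) :
    ∑ p, ∑ r, X p r * (1 : Matrix ι ι ℂ) p r = trace X := by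
  simp [one_apply, trace]

lemma sum_mul_R2_one_apply {q : ℕ} (X : MQ q) :
    ∑ p, ∑ r, X p r * R2 (1 : MQ q) p r = trace (R2 X) := by
  simp [R2, one_apply, trace, Fintype.sum_prod_type, Prod.ext_iff, ite_and]

lemma δ_comm {α : Type*} [DecidableEq α] (a b : α) : δ a b = δ b a := by
  simp only [δ, eq_comm]

lemma one_apply_eq_δ_mul_δ {n : Type*} [Fintype n] [DecidableEq n] (p r : n × n) :
    (1 : Matrix (n × n) (n × n) ℂ) p r = δ p.1 r.1 * δ p.2 r.2 := by
  simp only [one_apply, δ, Prod.ext_iff, ite_zero_mul_ite_zero, mul_one]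

lemma R2_one_apply {q : ℕ} (p r : Fin q × Fin q) : R2 (1 : MQ q) p r = δ p.1 p.2 * δ r.1 r.2 :=
  one_apply_eq_δ_mul_δ _ _

lemma weingarten_deltas_eq_pairTensor {q : ℕ} (c₁ c₂ : ℂ) :
    (fun p₁ p₂ p₃ p₄ : Fin q × Fin q =>
      c₁ * (δ p₂.1 p₂.2 * δ p₃.1 p₃.2 * δ p₁.2 p₁.1 * δ p₄.2 p₄.1 +
          δ p₂.1 p₁.1 * δ p₃.1 p₄.1 * δ p₂.2 p₁.2 * δ p₃.2 p₄.2) -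
        c₂ * (δ p₂.1 p₂.2 * δ p₃.1 p₄.1 * δ p₁.2 p₁.1 * δ p₄.2 p₃.2 +
          δ p₂.1 p₁.1 * δ p₃.1 p₃.2 * δ p₂.2 p₁.2 * δ p₄.2 p₄.1)) =
    c₁ • (pairTensor (R2 1) (R2 1) + pairTensor 1 1) -
      c₂ • (pairTensor (R2 1) 1 + pairTensor 1 (R2 1)) := by
  funext p₁ p₂ p₃ p₄
  simp only [Pi.sub_apply, Pi.smul_apply, Pi.add_apply, smul_eq_mul, pairTensor,
    one_apply_eq_δ_mul_δ, R2_one_apply]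
  rw [δ_comm p₁.2 p₁.1, δ_comm p₄.2 p₄.1, δ_comm p₂.1 p₁.1, δ_comm p₂.2 p₁.2, δ_comm p₄.2 p₃.2]
  ring

theorem haar_average_trace_formula_general (q : ℕ)
    (μ : Measure (Matrix (Fin q) (Fin q) ℂ))
    (hInt : ∀ j k β γ α τ i m : Fin q,
      Integrable (fun u : Matrix (Fin q) (Fin q) ℂ =>
        u j k * star (u β γ) * u α τ * star (u i m)) μ)
    (hW : ∀ j k β γ α τ i m : Fin q,
      ∫ u, u j k * star (u β γ) * u α τ * star (u i m) ∂μ =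
        (1 / ((q : ℂ) ^ 2 - 1)) *
          (δ j β * δ k γ * δ α i * δ τ m + δ j i * δ k m * δ β α * δ γ τ) -
        (1 / ((q : ℂ) * ((q : ℂ) ^ 2 - 1))) *
          (δ j β * δ k m * δ α i * δ τ γ + δ j i * δ k γ * δ β α * δ τ m))
    (A B : MQ q) :
    ∫ u, Matrix.trace ((Aᴴ * A) * (u ⊗ₖ u.map star) * (B * Bᴴ) * (uᴴ ⊗ₖ uᵀ)) ∂μ =
      (1 / ((q : ℂ) ^ 2 - 1)) *
        (Matrix.trace (R2 (Aᴴ * A)) * Matrix.trace (R2 (B * Bᴴ)) +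
          Matrix.trace (Aᴴ * A) * Matrix.trace (B * Bᴴ)) -
      (1 / ((q : ℂ) * ((q : ℂ) ^ 2 - 1))) *
        (Matrix.trace (R2 (Aᴴ * A)) * Matrix.trace (B * Bᴴ) +
          Matrix.trace (Aᴴ * A) * Matrix.trace (R2 (B * Bᴴ))) := by
  simp only [trace_mul_kronecker_mul_kronecker_eq_contract]
  rw [integral_contract _ _ _ fun _ _ _ _ => hInt _ _ _ _ _ _ _ _]
  simp only [hW]
  rw [weingarten_deltas_eq_pairTensor]
  simp only [map_sub, map_smul, map_add, contract_pairTensor, sum_mul_one_apply,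
    sum_mul_R2_one_apply, smul_eq_mul]

/-- for `X = A†A`, `Y = BB†`, the Haar average (encoded through
the second-moment Weingarten formula for the measure `μ`) of
`tr[X (u⊗u*) Y (u†⊗uᵀ)]` equals
`(1/(q²-1))(tr X^{R2} tr Y^{R2} + tr X tr Y)
 - (1/(q(q²-1)))(tr X^{R2} tr Y + tr X tr Y^{R2})`. -/
theorem haar_average_trace_formula (q : ℕ) (hq : 2 ≤ q)
    (μ : Measure (Matrix (Fin q) (Fin q) ℂ)) [IsProbabilityMeasure μ]
    (hInt : ∀ j k β γ α τ i m : Fin q,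
      Integrable (fun u : Matrix (Fin q) (Fin q) ℂ =>
        u j k * star (u β γ) * u α τ * star (u i m)) μ)
    (hW : ∀ j k β γ α τ i m : Fin q,
      ∫ u, u j k * star (u β γ) * u α τ * star (u i m) ∂μ =
        (1 / ((q : ℂ) ^ 2 - 1)) *
          (δ j β * δ k γ * δ α i * δ τ m + δ j i * δ k m * δ β α * δ γ τ) -
        (1 / ((q : ℂ) * ((q : ℂ) ^ 2 - 1))) *
          (δ j β * δ k m * δ α i * δ τ γ + δ j i * δ k γ * δ β α * δ τ m))
    (A B : MQ q) :
    ∫ u, Matrix.trace ((Aᴴ * A) * (u ⊗ₖ u.map star) * (B * Bᴴ) * (uᴴ ⊗ₖ uᵀ)) ∂μ =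
      (1 / ((q : ℂ) ^ 2 - 1)) *
        (Matrix.trace (R2 (Aᴴ * A)) * Matrix.trace (R2 (B * Bᴴ)) +
          Matrix.trace (Aᴴ * A) * Matrix.trace (B * Bᴴ)) -
      (1 / ((q : ℂ) * ((q : ℂ) ^ 2 - 1))) *
        (Matrix.trace (R2 (Aᴴ * A)) * Matrix.trace (B * Bᴴ) +
          Matrix.trace (Aᴴ * A) * Matrix.trace (R2 (B * Bᴴ))) :=
  haar_average_trace_formula_general q μ hInt hW A B
end

section
/- Let A, B be operators on C^q ⊗ C^q with tr((A†A)^{R2}) = 0 and tr((BB†)^{R2}) = 0 (equivalently A|Φ⁺⟩ = 0 and B†|Φ⁺⟩ = 0, up to scaling). Then the Haar average over u ∈ U(q) of ‖A(u⊗u*)B‖²_F equals ‖A‖²_F ‖B‖²_F / (q²-1). -/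
/-!
With `U = u ⊗ ū`, cyclicity of the trace gives `‖A U B‖²_F = tr (A†A · U · BB† · U†)`.
For arbitrary `X, Y` the second-moment Weingarten formula evaluates the average of
`tr (X U Y U†)` to a combination of `tr X`, `tr Y`, `tr X^{R2}` and `tr Y^{R2}`: each of the
two pairings of `u` with `ū` in a single tensor factor either contracts `X` with itself across
the factors (giving `tr X^{R2} = q ⟨Φ⁺|X|Φ⁺⟩`) or along them (giving `tr X`). The hypotheses
kill every term containing `tr (A†A)^{R2}` or `tr (BB†)^{R2}`, leaving
`tr (A†A) tr (BB†) / (q² - 1)`.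
-/

open Matrix Kronecker MeasureTheory

lemma trace_mul_mul_mul_conjTranspose_self {l m n p R : Type*} [Fintype l] [Fintype m]
    [Fintype n] [Fintype p] [CommSemiring R] [StarRing R]
    (A : Matrix l m R) (U : Matrix m n R) (B : Matrix n p R) :
    trace (A * U * B * (A * U * B)ᴴ) = trace (Aᴴ * A * U * (B * Bᴴ) * Uᴴ) := by
  rw [conjTranspose_mul, conjTranspose_mul]
  simp only [← Matrix.mul_assoc]
  rw [trace_mul_comm]
  simp only [Matrix.mul_assoc]

open scoped ComplexOrder in
lemma im_trace_mul_conjTranspose_self {m n : Type*} [Fintype m] [Fintype n]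
    (A : Matrix m n ℂ) : (trace (A * Aᴴ)).im = 0 :=
  (Complex.nonneg_iff.mp (posSemidef_self_mul_conjTranspose A).trace_nonneg).2.symm

section Twirl

variable {q : ℕ}

/-- `∫ u_{jk} ū_{βγ} u_{ατ} ū_{im} dU` as the Weingarten sum over pairs of permutations of
`S₂`, with `Wg(id) = 1/(q²-1)` and `Wg(swap) = -1/(q(q²-1))`. -/
noncomputable def weingarten2 (q : ℕ) (j k β γ α τ i m : Fin q) : ℂ :=
  (1 / ((q : ℂ) ^ 2 - 1)) *
      (δ j β * δ k γ * δ α i * δ τ m + δ j i * δ k m * δ β α * δ γ τ) -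
    (1 / ((q : ℂ) * ((q : ℂ) ^ 2 - 1))) *
      (δ j β * δ k m * δ α i * δ τ γ + δ j i * δ k γ * δ β α * δ τ m)

lemma trace_mul_kronecker_mul_conjTranspose (X Y : MQ q) (u : Matrix (Fin q) (Fin q) ℂ) :
    trace (X * (u ⊗ₖ u.map star) * Y * (u ⊗ₖ u.map star)ᴴ) =
      ∑ s', ∑ s, ∑ t, ∑ t', X s' s * Y t t' *
        (u s.1 t.1 * star (u s.2 t.2) * u s'.2 t'.2 * star (u s'.1 t'.1)) := by
  simp only [trace, diag, mul_apply, conjTranspose_apply, kroneckerMap_apply, map_apply,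
    Finset.sum_mul]
  refine Finset.sum_congr rfl fun s' _ => ?_
  rw [Finset.sum_comm, Finset.sum_congr rfl fun t _ => Finset.sum_comm, Finset.sum_comm]
  refine Finset.sum_congr rfl fun s _ => Finset.sum_congr rfl fun t _ =>
    Finset.sum_congr rfl fun t' _ => ?_
  simp only [star_mul', star_star]
  ring

lemma sum_mul_weingarten2 (X Y : MQ q) :
    ∑ s', ∑ s, ∑ t, ∑ t', X s' s * Y t t' *
        weingarten2 q s.1 t.1 s.2 t.2 s'.2 t'.2 s'.1 t'.1 =
      (trace (R2 X) * trace (R2 Y) + trace X * trace Y) / ((q : ℂ) ^ 2 - 1) -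
      (trace (R2 X) * trace Y + trace X * trace (R2 Y)) / ((q : ℂ) * ((q : ℂ) ^ 2 - 1)) := by
  simp only [weingarten2, trace, diag, R2, Finset.sum_mul_sum]
  simp only [div_eq_mul_inv, one_mul, δ, mul_ite, mul_one, mul_zero, mul_add, mul_sub,
    Finset.sum_sub_distrib, Finset.sum_add_distrib, Fintype.sum_prod_type, Finset.sum_ite_eq',
    Finset.mem_univ, ↓reduceIte, Finset.sum_ite_irrel, Finset.sum_const_zero, Finset.sum_ite_eq,
    Prod.mk.eta]
  simp only [← Finset.sum_mul]
  ring

variable {μ : Measure (Matrix (Fin q) (Fin q) ℂ)}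

lemma integrable_trace_mul_kronecker_mul_conjTranspose
    (hInt : ∀ j k β γ α τ i m : Fin q,
      Integrable (fun u : Matrix (Fin q) (Fin q) ℂ =>
        u j k * star (u β γ) * u α τ * star (u i m)) μ)
    (X Y : MQ q) :
    Integrable (fun u : Matrix (Fin q) (Fin q) ℂ =>
      trace (X * (u ⊗ₖ u.map star) * Y * (u ⊗ₖ u.map star)ᴴ)) μ := by
  simp_rw [trace_mul_kronecker_mul_conjTranspose]
  refine integrable_finsetSum _ fun s' _ => integrable_finsetSum _ fun s _ =>
    integrable_finsetSum _ fun t _ => integrable_finsetSum _ fun t' _ => ?_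
  exact (hInt _ _ _ _ _ _ _ _).const_mul _

lemma integral_trace_mul_kronecker_mul_conjTranspose
    (hInt : ∀ j k β γ α τ i m : Fin q,
      Integrable (fun u : Matrix (Fin q) (Fin q) ℂ =>
        u j k * star (u β γ) * u α τ * star (u i m)) μ)
    (hW : ∀ j k β γ α τ i m : Fin q,
      ∫ u, u j k * star (u β γ) * u α τ * star (u i m) ∂μ = weingarten2 q j k β γ α τ i m)
    (X Y : MQ q) :
    ∫ u, trace (X * (u ⊗ₖ u.map star) * Y * (u ⊗ₖ u.map star)ᴴ) ∂μ =
      (trace (R2 X) * trace (R2 Y) + trace X * trace Y) / ((q : ℂ) ^ 2 - 1) -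
      (trace (R2 X) * trace Y + trace X * trace (R2 Y)) / ((q : ℂ) * ((q : ℂ) ^ 2 - 1)) := by
  have hsum : ∀ (ι : Type) [Fintype ι] (f : ι → Matrix (Fin q) (Fin q) ℂ → ℂ),
      (∀ i, Integrable (f i) μ) → Integrable (fun u => ∑ i, f i u) μ :=
    fun ι _ f hf => integrable_finsetSum _ fun i _ => hf i
  have hterm : ∀ s' s t t' : Fin q × Fin q, Integrable (fun u : Matrix (Fin q) (Fin q) ℂ =>
      X s' s * Y t t' * (u s.1 t.1 * star (u s.2 t.2) * u s'.2 t'.2 * star (u s'.1 t'.1))) μ :=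
    fun s' s t t' => (hInt _ _ _ _ _ _ _ _).const_mul _
  simp_rw [trace_mul_kronecker_mul_conjTranspose]
  rw [← sum_mul_weingarten2]
  simp only [← hW, ← integral_const_mul]
  rw [integral_finsetSum _ fun s' _ => hsum _ _ fun s => hsum _ _ fun t => hsum _ _ fun t' =>
    hterm s' s t t']
  refine Finset.sum_congr rfl fun s' _ => ?_
  rw [integral_finsetSum _ fun s _ => hsum _ _ fun t => hsum _ _ fun t' => hterm s' s t t']
  refine Finset.sum_congr rfl fun s _ => ?_
  rw [integral_finsetSum _ fun t _ => hsum _ _ fun t' => hterm s' s t t']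
  exact Finset.sum_congr rfl fun t _ => integral_finsetSum _ fun t' _ => hterm s' s t t'

end Twirl

/-- `μ` stands for Haar measure on `U(q)`, through its second moments `hW`. -/
theorem haar_average_norm_product_general (q : ℕ)
    (μ : Measure (Matrix (Fin q) (Fin q) ℂ))
    (hInt : ∀ j k β γ α τ i m : Fin q,
      Integrable (fun u : Matrix (Fin q) (Fin q) ℂ =>
        u j k * star (u β γ) * u α τ * star (u i m)) μ)
    (hW : ∀ j k β γ α τ i m : Fin q,
      ∫ u, u j k * star (u β γ) * u α τ * star (u i m) ∂μ =
        (1 / ((q : ℂ) ^ 2 - 1)) *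
          (δ j β * δ k γ * δ α i * δ τ m + δ j i * δ k m * δ β α * δ γ τ) -
        (1 / ((q : ℂ) * ((q : ℂ) ^ 2 - 1))) *
          (δ j β * δ k m * δ α i * δ τ γ + δ j i * δ k γ * δ β α * δ τ m))
    (A B : MQ q)
    (hA : Matrix.trace (R2 (Aᴴ * A)) = 0)
    (hB : Matrix.trace (R2 (B * Bᴴ)) = 0) :
    ∫ u, (Matrix.trace ((A * (u ⊗ₖ u.map star) * B) *
        (A * (u ⊗ₖ u.map star) * B)ᴴ)).re ∂μ =
      (Matrix.trace (A * Aᴴ)).re * (Matrix.trace (B * Bᴴ)).re / ((q : ℝ) ^ 2 - 1) := by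
  simp_rw [trace_mul_mul_mul_conjTranspose_self, ← RCLike.re_to_complex]
  rw [integral_re (integrable_trace_mul_kronecker_mul_conjTranspose hInt _ _),
    integral_trace_mul_kronecker_mul_conjTranspose hInt hW, hA, hB, trace_mul_comm Aᴴ,
    ← Complex.re_add_im (trace (A * Aᴴ)), ← Complex.re_add_im (trace (B * Bᴴ)),
    im_trace_mul_conjTranspose_self, im_trace_mul_conjTranspose_self]
  simp only [mul_zero, Complex.ofReal_zero, zero_mul, add_zero, zero_add, zero_div, sub_zero,
    RCLike.re_to_complex]
  norm_cast

/-- if `tr((A†A)^{R2}) = 0` and `tr((BB†)^{R2}) = 0`, then the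
Haar average (encoded by the second-moment Weingarten formula for `μ`) of the
squared Frobenius norm `‖A (u⊗u*) B‖²_F` equals `‖A‖²_F ‖B‖²_F / (q²-1)`. -/
theorem haar_average_norm_product (q : ℕ) (hq : 2 ≤ q)
    (μ : Measure (Matrix (Fin q) (Fin q) ℂ)) [IsProbabilityMeasure μ]
    (hInt : ∀ j k β γ α τ i m : Fin q,
      Integrable (fun u : Matrix (Fin q) (Fin q) ℂ =>
        u j k * star (u β γ) * u α τ * star (u i m)) μ)
    (hW : ∀ j k β γ α τ i m : Fin q,
      ∫ u, u j k * star (u β γ) * u α τ * star (u i m) ∂μ =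
        (1 / ((q : ℂ) ^ 2 - 1)) *
          (δ j β * δ k γ * δ α i * δ τ m + δ j i * δ k m * δ β α * δ γ τ) -
        (1 / ((q : ℂ) * ((q : ℂ) ^ 2 - 1))) *
          (δ j β * δ k m * δ α i * δ τ γ + δ j i * δ k γ * δ β α * δ τ m))
    (A B : MQ q)
    (hA : Matrix.trace (R2 (Aᴴ * A)) = 0)
    (hB : Matrix.trace (R2 (B * Bᴴ)) = 0) :
    ∫ u, (Matrix.trace ((A * (u ⊗ₖ u.map star) * B) *
        (A * (u ⊗ₖ u.map star) * B)ᴴ)).re ∂μ =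
      (Matrix.trace (A * Aᴴ)).re * (Matrix.trace (B * Bᴴ)).re / ((q : ℝ) ^ 2 - 1) :=
  haar_average_norm_product_general q μ hInt hW A B hA hB
end

section
/- A permutation operator P on C^q ⊗ C^q given by P|i⟩|j⟩ = |k_{ij}⟩|l_{ij}⟩ is dual-unitary (P^{R2} unitary) if and only if for each fixed i the map j ↦ k_{ij} is injective and for each fixed j the map i ↦ l_{ij} is injective. -/
open Matrix

/-- The permutation operator `P|i⟩|j⟩ = |k_{ij}⟩|l_{ij}⟩`. -/
def Pmat {q : ℕ} (k l : Fin q → Fin q → Fin q) : MQ q :=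
  fun p r => if p.1 = k r.1 r.2 ∧ p.2 = l r.1 r.2 then 1 else 0

/-!
`R2 (Pmat k l)` is the 0-1 matrix of the relation `(i, j) ~ (α, β) ↔ i = k j β ∧ α = l j β`.
A 0-1 matrix `M` has `(Mᴴ M) y y' = #{x | x ~ y ∧ x ~ y'}`, so it is unitary exactly when every
column has a single nonzero entry and no two columns share one. For the relation above the first
condition says that each `i ↦ l i β` is bijective, and the second that each `β ↦ k j β` is
injective.
-/

open Finset

theorem existsUnique_fst_eq_and_iff {α β : Type*} (f : β → α) (P : β → Prop) :
    (∃! p : α × β, p.1 = f p.2 ∧ P p.2) ↔ ∃! b, P b := by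
  constructor
  · rintro ⟨⟨a, b⟩, ⟨-, hb⟩, huniq⟩
    exact ⟨b, hb, fun b' hb' => congrArg Prod.snd (huniq (f b', b') ⟨rfl, hb'⟩)⟩
  · rintro ⟨b, hb, huniq⟩
    exact ⟨(f b, b), ⟨rfl, hb⟩, fun p ⟨hp, hpb⟩ =>
      Prod.ext (hp.trans (congrArg f (huniq _ hpb))) (huniq _ hpb)⟩

namespace Matrix

variable {m n R : Type*}

def ofRel [Zero R] [One R] (r : m → n → Prop) [∀ x y, Decidable (r x y)] : Matrix m n R :=
  of fun x y => if r x y then 1 else 0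

theorem conjTranspose_ofRel_mul_ofRel [Fintype m] [NonAssocSemiring R] [StarRing R]
    (r : m → n → Prop) [∀ x y, Decidable (r x y)] :
    (ofRel r : Matrix m n R)ᴴ * (ofRel r : Matrix m n R) =
      of fun y y' => (#{x | r x y ∧ r x y'} : R) := by
  ext y y'
  rw [mul_apply, of_apply, card_filter, Nat.cast_sum]
  refine sum_congr rfl fun x _ => ?_
  simp only [ofRel, conjTranspose_apply, of_apply]
  by_cases hy : r x y <;> by_cases hy' : r x y' <;> simp [hy, hy']

theorem ofRel_mem_unitaryGroup_iff [Fintype n] [DecidableEq n] [CommRing R] [StarRing R]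
    [CharZero R] (r : n → n → Prop) [∀ x y, Decidable (r x y)] :
    (ofRel r : Matrix n n R) ∈ unitaryGroup n R ↔
      (∀ y, ∃! x, r x y) ∧ ∀ x y y', r x y → r x y' → y = y' := by
  rw [mem_unitaryGroup_iff', star_eq_conjTranspose, conjTranspose_ofRel_mul_ofRel,
    ← Matrix.ext_iff]
  simp only [of_apply, one_apply]
  constructor
  · intro h
    refine ⟨fun y => ?_, fun x y y' hy hy' => ?_⟩
    · have hcard := h y y
      rw [if_pos rfl, Nat.cast_eq_one] at hcard
      simpa [Fintype.existsUnique_iff_card_one] using hcard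
    · by_contra hne
      have hcard := h y y'
      rw [if_neg hne, Nat.cast_eq_zero, card_eq_zero, filter_eq_empty_iff] at hcard
      exact hcard (mem_univ x) ⟨hy, hy'⟩
  · rintro ⟨hcol, hdisj⟩ y y'
    split_ifs with hyy
    · subst hyy
      simpa [Fintype.existsUnique_iff_card_one] using hcol y
    · rw [Nat.cast_eq_zero, card_eq_zero, filter_eq_empty_iff]
      exact fun x _ hxy => hyy (hdisj x y y' hxy.1 hxy.2)

end Matrix

theorem R2_Pmat {q : ℕ} (k l : Fin q → Fin q → Fin q) :
    R2 (Pmat k l) = ofRel fun (x y : Fin q × Fin q) => x.1 = k x.2 y.2 ∧ y.1 = l x.2 y.2 :=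
  rfl

theorem permutation_dual_unitary_iff_general (q : ℕ) (k l : Fin q → Fin q → Fin q) :
    R2 (Pmat k l) ∈ Matrix.unitaryGroup (Fin q × Fin q) ℂ ↔
      ((∀ i, Function.Injective (fun j => k i j)) ∧
        (∀ j, Function.Injective (fun i => l i j))) := by
  rw [R2_Pmat, ofRel_mem_unitaryGroup_iff]
  refine (and_congr ?_ ?_).trans and_comm
  · simp only [Prod.forall, Finite.injective_iff_bijective, Function.bijective_iff_existsUnique]
    rw [forall_comm]
    refine forall₂_congr fun β α => ?_
    rw [existsUnique_fst_eq_and_iff (k · β) (α = l · β)]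
    simp only [eq_comm]
  · constructor
    · intro h j β β' hk
      exact congrArg Prod.snd (h (k j β, j) (l j β, β) (l j β', β') ⟨rfl, rfl⟩ ⟨hk, rfl⟩)
    · rintro hk ⟨i, j⟩ ⟨α, β⟩ ⟨α', β'⟩ ⟨hi, hα⟩ ⟨hi', hα'⟩
      obtain rfl : β = β' := hk j (hi.symm.trans hi')
      exact Prod.ext (hα.trans hα'.symm) rfl

/-- the permutation operator `P` is dual-unitary (`P^{R2}`
unitary) iff for each `i` the map `j ↦ k_{ij}` is injective and for each `j`
the map `i ↦ l_{ij}` is injective. -/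
theorem permutation_dual_unitary_iff (q : ℕ) (k l : Fin q → Fin q → Fin q)
    (hbij : Function.Bijective (fun p : Fin q × Fin q => (k p.1 p.2, l p.1 p.2))) :
    R2 (Pmat k l) ∈ Matrix.unitaryGroup (Fin q × Fin q) ℂ ↔
      ((∀ i, Function.Injective (fun j => k i j)) ∧
        (∀ j, Function.Injective (fun i => l i j))) :=
  permutation_dual_unitary_iff_general q k l
end

section
/- The coupled quantum cat map U_C on C^q ⊗ C^q with matrix elements ⟨kα|U_C|jβ⟩ = (1/q)exp(-(2πi/q)[kα + 2jβ - kβ - jα]) is unitary and dual-unitary (U_C^{R1} is unitary) for every integer q ≥ 2. -/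
open Matrix

/-- The coupled quantum cat map:
`⟨kα|U_C|jβ⟩ = (1/q) exp(-(2πi/q)[kα + 2jβ - kβ - jα])`. -/
noncomputable def catMap (q : ℕ) : MQ q := fun p r =>
  (q : ℂ)⁻¹ * Complex.exp (-(2 * Real.pi * Complex.I / q) *
    (((p.1.val * p.2.val : ℤ) + 2 * (r.1.val * r.2.val : ℤ)
      - (p.1.val * r.2.val : ℤ) - (p.2.val * r.1.val : ℤ) : ℤ) : ℂ))

/-!
Every matrix entry involved is `q⁻¹` times a `q`-th root of unity whose exponent is affine in the
column index. The inner product of two rows is then `q⁻²` times a phase times a product of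
two geometric sums `∑ₘ e^{-2πi l m / q} = q · [q ∣ l]`, so the rows are orthonormal as soon as the
linear coefficients of the exponent determine the row modulo `q`. For `U_C` the row `(k, α)` has
coefficients `(-α, -k)`; for `U_C^{R1}` the row `(β, α)` has coefficients `(2β - α, α - β)`, an
invertible change of variables over `ℤ/q`.
-/

open Complex

lemma Fin.natCast_val_injective (q : ℕ) :
    Function.Injective fun i : Fin q => ((i : ℕ) : ZMod q) := by
  intro i j h
  have hval := congrArg ZMod.val h
  simp only [ZMod.val_cast_of_lt i.isLt, ZMod.val_cast_of_lt j.isLt] at hval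
  exact Fin.ext hval

noncomputable def phase (q : ℕ) (n : ℤ) : ℂ := exp (-(2 * Real.pi * I / q) * n)

lemma phase_add (q : ℕ) (m n : ℤ) : phase q (m + n) = phase q m * phase q n := by
  rw [phase, phase, phase, ← exp_add]
  push_cast
  ring_nf

lemma star_phase (q : ℕ) (n : ℤ) : star (phase q n) = phase q (-n) := by
  rw [phase, phase, star_def, ← exp_conj]
  simp only [map_neg, map_mul, map_div₀, conj_I, conj_ofReal, map_natCast, map_intCast, map_ofNat,
    Int.cast_neg]
  ring_nf

lemma phase_eq_zpow (q : ℕ) (n : ℤ) : phase q n = exp (2 * Real.pi * I / q) ^ (-n) := by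
  rw [phase, ← exp_int_mul]
  push_cast
  ring_nf

lemma sum_phase_mul (q : ℕ) [NeZero q] (a : ℤ) :
    ∑ m : Fin q, phase q (a * m) = if (a : ZMod q) = 0 then (q : ℂ) else 0 := by
  set ζ := exp (2 * Real.pi * I / q)
  have hζ : IsPrimitiveRoot ζ q := isPrimitiveRoot_exp q (NeZero.ne q)
  have hpow : (ζ ^ (-a)) ^ q = 1 := by
    rw [← zpow_natCast, ← _root_.zpow_mul, mul_comm, _root_.zpow_mul, zpow_natCast, hζ.pow_eq_one,
      _root_.one_zpow]
  have hsum : ∑ m : Fin q, phase q (a * m) = ∑ i ∈ Finset.range q, (ζ ^ (-a)) ^ i := by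
    rw [← Fin.sum_univ_eq_sum_range]
    refine Finset.sum_congr rfl fun m _ => ?_
    rw [phase_eq_zpow, ← zpow_natCast, ← _root_.zpow_mul, neg_mul]
  rw [hsum]
  split_ifs with ha <;> rw [ZMod.intCast_zmod_eq_zero_iff_dvd] at ha
  · simp [(hζ.zpow_eq_one_iff_dvd _).mpr (dvd_neg.mpr ha)]
  · have hne : ζ ^ (-a) ≠ 1 := fun h => ha (dvd_neg.mp ((hζ.zpow_eq_one_iff_dvd _).mp h))
    rw [geom_sum_eq hne, hpow, sub_self, zero_div]

lemma sum_phase_linear (q : ℕ) [NeZero q] (a b : ℤ) :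
    ∑ r : Fin q × Fin q, phase q (a * r.1 + b * r.2) =
      (if (a : ZMod q) = 0 then (q : ℂ) else 0) * (if (b : ZMod q) = 0 then (q : ℂ) else 0) := by
  simp only [phase_add, Fintype.sum_prod_type, ← Finset.sum_mul_sum, sum_phase_mul]

theorem mul_conjTranspose_eq_one_of_phase {ι : Type*} [DecidableEq ι] (q : ℕ) [NeZero q]
    (M : Matrix ι (Fin q × Fin q) ℂ) (c a b : ι → ℤ) (d : Fin q × Fin q → ℤ)
    (hM : ∀ p r, M p r = (q : ℂ)⁻¹ * phase q (c p + a p * r.1 + b p * r.2 + d r))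
    (hinj : Function.Injective fun p => ((a p : ZMod q), (b p : ZMod q))) :
    M * Mᴴ = 1 := by
  ext p p'
  have hterm : ∀ r : Fin q × Fin q, M p r * star (M p' r) = (q : ℂ)⁻¹ * (q : ℂ)⁻¹ *
      (phase q (c p - c p') * phase q ((a p - a p') * r.1 + (b p - b p') * r.2)) := by
    intro r
    rw [hM, hM, star_mul', star_inv₀, star_natCast, star_phase, mul_mul_mul_comm, ← phase_add,
      ← phase_add]
    ring_nf
  rw [Matrix.mul_apply, Matrix.one_apply]
  simp only [Matrix.conjTranspose_apply, hterm, ← Finset.mul_sum, sum_phase_linear]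
  by_cases hpp : p = p'
  · subst hpp
    have hq : (q : ℂ) ≠ 0 := NeZero.ne _
    simp only [phase, sub_self, Int.cast_zero, mul_zero, exp_zero, ↓reduceIte, one_mul]
    field_simp
  · have hne : ¬ ((a p - a p' : ℤ) : ZMod q) = 0 ∨ ¬ ((b p - b p' : ℤ) : ZMod q) = 0 := by
      by_contra! h
      push_cast [sub_eq_zero] at h
      exact hpp (hinj (Prod.ext h.1 h.2))
    rcases hne with h | h <;> simp only [if_neg h, if_neg hpp, mul_zero, zero_mul]

lemma catMap_apply (q : ℕ) (p r : Fin q × Fin q) :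
    catMap q p r = (q : ℂ)⁻¹ * phase q (p.1 * p.2 + 2 * (r.1 * r.2) - p.1 * r.2 - p.2 * r.1) :=
  rfl

/-- the coupled quantum cat map is unitary and dual-unitary
(`U_C^{R1}` is unitary) for every `q ≥ 2`. -/
theorem catMap_unitary_and_dual (q : ℕ) (hq : 2 ≤ q) :
    catMap q ∈ Matrix.unitaryGroup (Fin q × Fin q) ℂ ∧
    R1 (catMap q) ∈ Matrix.unitaryGroup (Fin q × Fin q) ℂ := by
  have : NeZero q := ⟨by omega⟩
  have hcast := Fin.natCast_val_injective q
  simp only [Matrix.mem_unitaryGroup_iff, Matrix.star_eq_conjTranspose]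
  constructor
  · refine mul_conjTranspose_eq_one_of_phase q _ (fun p => p.1 * p.2) (fun p => -p.2)
      (fun p => -p.1) (fun r => 2 * (r.1 * r.2)) (fun p r => ?_) ?_
    · rw [catMap_apply]; congr 2; ring
    · rintro ⟨k, α⟩ ⟨k', α'⟩ h
      push_cast [Prod.mk.injEq, neg_inj] at h
      rw [hcast h.2, hcast h.1]
  · refine mul_conjTranspose_eq_one_of_phase q _ (fun _ => 0) (fun p => 2 * p.1 - p.2)
      (fun p => p.2 - p.1) (fun _ => 0) (fun p r => ?_) ?_
    · rw [R1, catMap_apply]; congr 2; ring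
    · rintro ⟨β, α⟩ ⟨β', α'⟩ h
      push_cast [Prod.mk.injEq] at h
      have hβ := hcast (show ((β : ℕ) : ZMod q) = β' by linear_combination h.1 + h.2)
      have hα := hcast (show ((α : ℕ) : ZMod q) = α' by linear_combination h.1 + 2 * h.2)
      rw [hβ, hα]
end
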